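/- arXiv:1602.04527 — 2 statements merged into one kernel-verified Lean document; each statement's English description precedes it below -/
import Mathlib

section
/- Let H be an infinite-dimensional separable complex Hilbert space, A a bounded self-adjoint operator on H, G a finite set of vectors in H, and L : G → ℕ ∪ {∞} a function satisfying the span condition: the closed linear span of { A^n g : g ∈ G, 0 ≤ n < L(g) } equals the closed linear span of { A^n g : g ∈ G, n ∈ ℕ }. Assume A^n g ≠ 0 for all g ∈ G and all n < L(g). Then the normalized family (A^n g / ‖A^n g‖), indexed by pairs (g,n) with g ∈ G and 0 ≤ n < L(g), is not a frame for H. -/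
/-!
In the finite case (every `L g` finite) the family is finite, so some nonzero `f` in the
infinite-dimensional space is orthogonal to all of it and the lower frame bound fails.

Otherwise some `g` has an infinite orbit. For self-adjoint `A`,
`⟪A^m g, A^(m+2k) g⟫ = ‖A^(m+k) g‖²`, so by Cauchy–Schwarz `a n = ‖A^n g‖` is log-convex:
the ratios `a (n+1) / a n` increase to a finite limit `s ≤ ‖A‖`. Hence for every fixed `k`
the inner product of the normalized vectors `u m` and `u (m+2k)`, which is
`a (m+k)² / (a m * a (m+2k)) ≥ (a (m+1) / (a m * s))^k`, tends to `1` as `m → ∞`. Taking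
`f = u m` for `m` large, more than `4β` coefficients `|⟪f, u (m+2k)⟫|²` exceed `1/4`,
contradicting the upper frame bound `β`.
-/

open ContinuousLinearMap Filter Topology
open scoped InnerProductSpace ENNReal

lemma finite_subtype_lt_of_ne_top {ι : Type*} [Finite ι] (L : ι → ℕ∞) (hL : ∀ i, L i ≠ ⊤) :
    Finite {p : ι × ℕ // (p.2 : ℕ∞) < L p.1} := by
  have hsub : {p : ι × ℕ | (p.2 : ℕ∞) < L p.1} ⊆ ⋃ i, {i} ×ˢ Set.Iio (L i).toNat := by
    rintro ⟨i, n⟩ (h : (n : ℕ∞) < L i)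
    rw [← ENat.natCast_toNat (hL i), Nat.cast_lt] at h
    exact Set.mem_iUnion.mpr ⟨i, rfl, h⟩
  exact ((Set.finite_iUnion fun i => (Set.finite_singleton i).prod (Set.finite_Iio _)).subset
    hsub).to_subtype

lemma exists_ne_zero_forall_inner_eq_zero {𝕜 E ι : Type*} [RCLike 𝕜] [NormedAddCommGroup E]
    [InnerProductSpace 𝕜 E] [Finite ι] (hE : ¬ FiniteDimensional 𝕜 E) (v : ι → E) :
    ∃ f : E, f ≠ 0 ∧ ∀ i, ⟪f, v i⟫_𝕜 = 0 := by
  set V := Submodule.span 𝕜 (Set.range v)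
  have hV_fin : FiniteDimensional 𝕜 V := FiniteDimensional.span_of_finite 𝕜 (Set.finite_range v)
  have hV : V ≠ ⊤ := fun h => hE <| by
    rw [h] at hV_fin
    exact Module.Finite.equiv (Submodule.topEquiv (R := 𝕜) (M := E))
  obtain ⟨f, hf, hf0⟩ := Submodule.exists_mem_ne_zero_of_ne_bot
    (mt Submodule.orthogonal_eq_bot_iff.mp hV)
  exact ⟨f, hf0, fun i =>
    Submodule.inner_left_of_mem_orthogonal (Submodule.subset_span (Set.mem_range_self i)) hf⟩

section LogConvex

variable {a : ℕ → ℝ}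

lemma monotone_div_succ_of_sq_le_mul (ha : ∀ n, 0 < a n)
    (hconv : ∀ n, a (n + 1) ^ 2 ≤ a n * a (n + 2)) : Monotone fun n => a (n + 1) / a n := by
  refine monotone_nat_of_le_succ fun n => ?_
  rw [div_le_div_iff₀ (ha n) (ha (n + 1))]
  nlinarith [hconv n]

lemma mul_div_succ_pow_le (ha : ∀ n, 0 < a n) (hconv : ∀ n, a (n + 1) ^ 2 ≤ a n * a (n + 2))
    (m k : ℕ) : a m * (a (m + 1) / a m) ^ k ≤ a (m + k) := by
  induction k with
  | zero => simp
  | succ k ih =>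
    have hmono : a (m + 1) / a m ≤ a (m + k + 1) / a (m + k) :=
      monotone_div_succ_of_sq_le_mul ha hconv (Nat.le_add_right m k)
    calc a m * (a (m + 1) / a m) ^ (k + 1) = a (m + 1) / a m * (a m * (a (m + 1) / a m) ^ k) := by
          ring
      _ ≤ a (m + k + 1) / a (m + k) * a (m + k) :=
          mul_le_mul hmono ih (mul_nonneg (ha m).le (pow_nonneg (div_nonneg (ha _).le (ha _).le) k))
            (div_nonneg (ha _).le (ha _).le)
      _ = a (m + (k + 1)) := div_mul_cancel₀ _ (ha _).ne'

lemma le_mul_pow_of_succ_le {s : ℝ} (hs : 0 ≤ s) (ha : ∀ n, a (n + 1) ≤ s * a n) (m k : ℕ) :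
    a (m + k) ≤ a m * s ^ k := by
  induction k with
  | zero => simp
  | succ k ih =>
    calc a (m + (k + 1)) ≤ s * a (m + k) := ha _
      _ ≤ s * (a m * s ^ k) := mul_le_mul_of_nonneg_left ih hs
      _ = a m * s ^ (k + 1) := by ring

lemma eventually_lt_sq_div_mul_of_sq_le_mul (ha : ∀ n, 0 < a n)
    (hconv : ∀ n, a (n + 1) ^ 2 ≤ a n * a (n + 2)) {C : ℝ} (hC : ∀ n, a (n + 1) ≤ C * a n)
    {δ : ℝ} (hδ : δ < 1) (k : ℕ) :
    ∀ᶠ m in atTop, δ < a (m + k) ^ 2 / (a m * a (m + 2 * k)) := by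
  set c : ℕ → ℝ := fun n => a (n + 1) / a n
  have hc_mono : Monotone c := monotone_div_succ_of_sq_le_mul ha hconv
  have hc_bdd : BddAbove (Set.range c) :=
    ⟨C, Set.forall_mem_range.mpr fun n => (div_le_iff₀ (ha n)).mpr (hC n)⟩
  set s := ⨆ n, c n
  have hc_le : ∀ n, c n ≤ s := le_ciSup hc_bdd
  have hs : 0 < s := (div_pos (ha 1) (ha 0)).trans_le (hc_le 0)
  have hlower : ∀ m, (c m / s) ^ k ≤ a (m + k) ^ 2 / (a m * a (m + 2 * k)) := by
    intro m
    have hup : a (m + 2 * k) ≤ a (m + k) * s ^ k := by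
      rw [two_mul, ← add_assoc]
      exact le_mul_pow_of_succ_le hs.le (fun n => (div_le_iff₀ (ha n)).mp (hc_le n)) _ _
    rw [le_div_iff₀ (mul_pos (ha _) (ha _)), div_pow]
    calc c m ^ k / s ^ k * (a m * a (m + 2 * k))
        = a m * c m ^ k * (a (m + 2 * k) / s ^ k) := by ring
      _ ≤ a (m + k) * a (m + k) :=
        mul_le_mul (mul_div_succ_pow_le ha hconv m k) ((div_le_iff₀ (by positivity)).mpr hup)
          (div_nonneg (ha _).le (by positivity)) (ha _).le
      _ = a (m + k) ^ 2 := (sq _).symm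
  have htend : Tendsto (fun m => (c m / s) ^ k) atTop (𝓝 1) := by
    have := ((tendsto_atTop_ciSup hc_mono hc_bdd).div_const s).pow k
    rwa [div_self hs.ne', one_pow] at this
  exact (htend.eventually (eventually_gt_nhds hδ)).mono fun m hm => hm.trans_le (hlower m)

end LogConvex

lemma card_mul_le_of_tsum_le {ι : Type*} {w : ι → ℝ≥0∞} {δ r : ℝ} (hδ : 0 < δ)
    (hw : ∑' i, w i ≤ ENNReal.ofReal r) {s : Finset ι} (hs : s.Nonempty)
    (hsw : ∀ i ∈ s, ENNReal.ofReal δ ≤ w i) : s.card * δ ≤ r := by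
  have hsum : ENNReal.ofReal (s.card * δ) ≤ ENNReal.ofReal r :=
    calc ENNReal.ofReal (s.card * δ) = s.card • ENNReal.ofReal δ := by
          rw [ENNReal.ofReal_mul (Nat.cast_nonneg _), ENNReal.ofReal_natCast, nsmul_eq_mul]
      _ ≤ ∑ i ∈ s, w i := Finset.card_nsmul_le_sum _ _ _ hsw
      _ ≤ ∑' i, w i := ENNReal.sum_le_tsum _
      _ ≤ ENNReal.ofReal r := hw
  have hpos : 0 < (s.card : ℝ) * δ := mul_pos (Nat.cast_pos.mpr hs.card_pos) hδ
  exact (ENNReal.ofReal_le_ofReal_iff'.mp hsum).resolve_right hpos.not_ge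

section SymmetricPowers

variable {𝕜 E : Type*} [RCLike 𝕜] [NormedAddCommGroup E] [InnerProductSpace 𝕜 E]
  {A : E →L[𝕜] E}

lemma pow_succ_apply' (A : E →L[𝕜] E) (n : ℕ) (x : E) : (A ^ (n + 1)) x = A ((A ^ n) x) := by
  rw [pow_succ']; rfl

lemma inner_pow_apply_pow_add_two_mul (hA : (A : E →ₗ[𝕜] E).IsSymmetric) (x : E) (p k : ℕ) :
    ⟪(A ^ p) x, (A ^ (p + 2 * k)) x⟫_𝕜 = (‖(A ^ (p + k)) x‖ : 𝕜) ^ 2 := by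
  induction k generalizing p with
  | zero => simp [inner_self_eq_norm_sq_to_K]
  | succ k ih =>
    calc ⟪(A ^ p) x, (A ^ (p + 2 * (k + 1))) x⟫_𝕜
        = ⟪A ((A ^ p) x), (A ^ (p + 1 + 2 * k)) x⟫_𝕜 := by
          rw [show p + 2 * (k + 1) = p + 1 + 2 * k + 1 by ring, pow_succ_apply',
            ← coe_coe A, hA]
      _ = (‖(A ^ (p + (k + 1))) x‖ : 𝕜) ^ 2 := by
          rw [← pow_succ_apply', ih, add_right_comm, add_assoc]

lemma sq_norm_pow_succ_apply_le (hA : (A : E →ₗ[𝕜] E).IsSymmetric) (x : E) (n : ℕ) :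
    ‖(A ^ (n + 1)) x‖ ^ 2 ≤ ‖(A ^ n) x‖ * ‖(A ^ (n + 2)) x‖ := by
  have h := norm_inner_le_norm (𝕜 := 𝕜) ((A ^ n) x) ((A ^ (n + 2 * 1)) x)
  rwa [inner_pow_apply_pow_add_two_mul hA, norm_pow, RCLike.norm_ofReal, abs_norm] at h

end SymmetricPowers

section NormalizedOrbit

variable {H : Type*} [NormedAddCommGroup H] [InnerProductSpace ℂ H] {A : H →L[ℂ] H}

lemma inner_normalize_pow_apply_normalize_pow_add_two_mul (hA : (A : H →ₗ[ℂ] H).IsSymmetric)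
    (x : H) (m k : ℕ) :
    ⟪(‖(A ^ m) x‖⁻¹ : ℝ) • (A ^ m) x, (‖(A ^ (m + 2 * k)) x‖⁻¹ : ℝ) • (A ^ (m + 2 * k)) x⟫_ℂ =
      ((‖(A ^ (m + k)) x‖ ^ 2 / (‖(A ^ m) x‖ * ‖(A ^ (m + 2 * k)) x‖) : ℝ) : ℂ) := by
  simp only [RCLike.real_smul_eq_coe_smul (K := ℂ), inner_smul_left, inner_smul_right,
    inner_pow_apply_pow_add_two_mul hA, RCLike.ofReal_eq_complex_ofReal, Complex.conj_ofReal]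
  push_cast
  ring

theorem not_exists_tsum_inner_normalized_pow_le (hA : (A : H →ₗ[ℂ] H).IsSymmetric) (x : H)
    (hx : ∀ n, (A ^ n) x ≠ 0) :
    ¬ ∃ β : ℝ, ∀ f : H, ∑' n : ℕ,
      (‖⟪f, (‖(A ^ n) x‖⁻¹ : ℝ) • (A ^ n) x⟫_ℂ‖₊ : ℝ≥0∞) ^ 2 ≤ ENNReal.ofReal (β * ‖f‖ ^ 2) := by
  rintro ⟨β, hβ⟩
  set a : ℕ → ℝ := fun n => ‖(A ^ n) x‖
  have ha : ∀ n, 0 < a n := fun n => norm_pos_iff.mpr (hx n)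
  set u : ℕ → H := fun n => (a n)⁻¹ • (A ^ n) x
  have hu : ∀ n, ‖u n‖ = 1 := fun n => by
    simp only [u, norm_smul, norm_inv, norm_norm, a]
    exact inv_mul_cancel₀ (ha n).ne'
  have hinner : ∀ m k, ⟪u m, u (m + 2 * k)⟫_ℂ = ((a (m + k) ^ 2 / (a m * a (m + 2 * k)) : ℝ) : ℂ) :=
    inner_normalize_pow_apply_normalize_pow_add_two_mul hA x
  have hC : ∀ n, a (n + 1) ≤ ‖A‖ * a n := fun n => by
    simp only [a, pow_succ_apply']
    exact A.le_opNorm _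
  set K := ⌈4 * β⌉₊
  obtain ⟨m, hm⟩ := ((Finset.range (K + 1)).eventually_all.mpr fun k _ =>
    eventually_lt_sq_div_mul_of_sq_le_mul ha (sq_norm_pow_succ_apply_le hA x) hC
      one_half_lt_one k).exists
  have hlarge : ∀ k ∈ Finset.range (K + 1),
      ENNReal.ofReal (1 / 4) ≤ (‖⟪u m, u (m + 2 * k)⟫_ℂ‖₊ : ℝ≥0∞) ^ 2 := by
    intro k hk
    have hT := hm k hk
    rw [hinner, ← enorm_eq_nnnorm, ← ofReal_norm, ← ENNReal.ofReal_pow (norm_nonneg _),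
      Complex.norm_real, Real.norm_of_nonneg (by linarith)]
    exact ENNReal.ofReal_le_ofReal (by nlinarith)
  have hcount := card_mul_le_of_tsum_le (s := (Finset.range (K + 1)).image (m + 2 * ·))
    (w := fun n => (‖⟪u m, u n⟫_ℂ‖₊ : ℝ≥0∞) ^ 2) (by norm_num)
    ((hβ (u m)).trans_eq (by rw [hu, one_pow, mul_one])) (by simp)
    (Finset.forall_mem_image.mpr hlarge)
  rw [Finset.card_image_of_injective _ fun k l h => by simpa using h, Finset.card_range] at hcount
  have hK : 4 * β ≤ K := Nat.le_ceil _
  push_cast at hcount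
  linarith

end NormalizedOrbit

theorem stmt_12_general {H : Type*} [NormedAddCommGroup H] [InnerProductSpace ℂ H] [CompleteSpace H]
    (hdim : ¬ FiniteDimensional ℂ H)
    (A : H →L[ℂ] H) (hA : adjoint A = A)
    (G : Set H) (hGfin : G.Finite) (L : ↥G → ℕ∞)
    (hnz : ∀ g : ↥G, ∀ n : ℕ, (n : ℕ∞) < L g → (A ^ n) (g : H) ≠ 0) :
    ¬ ∃ α β : ℝ, 0 < α ∧ α ≤ β ∧ ∀ f : H,
      ENNReal.ofReal (α * ‖f‖ ^ 2) ≤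
        (∑' q : {p : ↥G × ℕ // (p.2 : ℕ∞) < L p.1},
          (‖⟪f, (‖(A ^ q.1.2) (q.1.1 : H)‖⁻¹ : ℝ) • (A ^ q.1.2) (q.1.1 : H)⟫_ℂ‖₊ : ℝ≥0∞) ^ 2) ∧
      (∑' q : {p : ↥G × ℕ // (p.2 : ℕ∞) < L p.1},
          (‖⟪f, (‖(A ^ q.1.2) (q.1.1 : H)‖⁻¹ : ℝ) • (A ^ q.1.2) (q.1.1 : H)⟫_ℂ‖₊ : ℝ≥0∞) ^ 2) ≤
        ENNReal.ofReal (β * ‖f‖ ^ 2) := by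
  rintro ⟨α, β, hα, -, hframe⟩
  have hA_symm : (A : H →ₗ[ℂ] H).IsSymmetric := isSelfAdjoint_iff_isSymmetric.mp hA
  by_cases hinf : ∃ g, L g = ⊤
  · obtain ⟨g, hg⟩ := hinf
    have hlt : ∀ n : ℕ, (n : ℕ∞) < L g := fun n => hg ▸ ENat.natCast_lt_top n
    refine not_exists_tsum_inner_normalized_pow_le hA_symm g (fun n => hnz g n (hlt n))
      ⟨β, fun f => le_trans ?_ (hframe f).2⟩
    exact ENNReal.tsum_comp_le_tsum_of_injective
      (f := fun n => (⟨(g, n), hlt n⟩ : {p : ↥G × ℕ // (p.2 : ℕ∞) < L p.1}))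
      (fun n m h => by simpa using h) _
  · rw [not_exists] at hinf
    have := hGfin.to_subtype
    have := finite_subtype_lt_of_ne_top L hinf
    obtain ⟨f, hf0, hf⟩ := exists_ne_zero_forall_inner_eq_zero hdim
      fun q : {p : ↥G × ℕ // (p.2 : ℕ∞) < L p.1} =>
        (‖(A ^ q.1.2) (q.1.1 : H)‖⁻¹ : ℝ) • (A ^ q.1.2) (q.1.1 : H)
    have hlow := (hframe f).1
    simp only [hf, nnnorm_zero, ENNReal.coe_zero, ne_eq, OfNat.ofNat_ne_zero,
      not_false_eq_true, zero_pow, tsum_zero, nonpos_iff_eq_zero, ENNReal.ofReal_eq_zero] at hlow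
    exact hlow.not_gt (by positivity)

/-- If `A` is a bounded self-adjoint operator on an infinite-dimensional separable complex
Hilbert space `H`, `G` a finite set of vectors and `L : G → ℕ ∪ {∞}` satisfies the span
condition, with `A^n g ≠ 0` for all `g ∈ G`, `n < L g`, then the normalized system
`(A^n g / ‖A^n g‖)_{g ∈ G, 0 ≤ n < L g}` is not a frame for `H`. -/
theorem stmt_12 {H : Type*} [NormedAddCommGroup H] [InnerProductSpace ℂ H] [CompleteSpace H]
    [TopologicalSpace.SeparableSpace H] (hdim : ¬ FiniteDimensional ℂ H)
    (A : H →L[ℂ] H) (hA : adjoint A = A)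
    (G : Set H) (hGfin : G.Finite) (L : ↥G → ℕ∞)
    (hspan :
      (Submodule.span ℂ
        {x | ∃ g : ↥G, ∃ n : ℕ, (n : ℕ∞) < L g ∧ x = (A ^ n) (g : H)}).topologicalClosure =
      (Submodule.span ℂ
        {x | ∃ g : ↥G, ∃ n : ℕ, x = (A ^ n) (g : H)}).topologicalClosure)
    (hnz : ∀ g : ↥G, ∀ n : ℕ, (n : ℕ∞) < L g → (A ^ n) (g : H) ≠ 0) :
    ¬ ∃ α β : ℝ, 0 < α ∧ α ≤ β ∧ ∀ f : H,
      ENNReal.ofReal (α * ‖f‖ ^ 2) ≤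
        (∑' q : {p : ↥G × ℕ // (p.2 : ℕ∞) < L p.1},
          (‖⟪f, (‖(A ^ q.1.2) (q.1.1 : H)‖⁻¹ : ℝ) • (A ^ q.1.2) (q.1.1 : H)⟫_ℂ‖₊ : ℝ≥0∞) ^ 2) ∧
      (∑' q : {p : ↥G × ℕ // (p.2 : ℕ∞) < L p.1},
          (‖⟪f, (‖(A ^ q.1.2) (q.1.1 : H)‖⁻¹ : ℝ) • (A ^ q.1.2) (q.1.1 : H)⟫_ℂ‖₊ : ℝ≥0∞) ^ 2) ≤
        ENNReal.ofReal (β * ‖f‖ ^ 2) :=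
  stmt_12_general hdim A hA G hGfin L hnz
end

section
/- Let H be a complex Hilbert space, A a bounded normal operator on H, and G a countable set of vectors in H such that: (i) for every g ∈ G there exists a natural number l(g) with A^{l(g)} g belonging to the linear span of { A^k g : 0 ≤ k < l(g) }; and (ii) the family (A^n g), indexed by pairs (g,n) with g ∈ G and 0 ≤ n ≤ l(g), is complete in H. Then H admits an orthonormal (Hilbert) basis consisting of eigenvectors of A; moreover, every g ∈ G is a sum of at most l(g) eigenvectors of A corresponding to distinct eigenvalues. -/
/-!
Each `g ∈ G` lies in the finite-dimensional `A`-invariant Krylov space spanned by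
`g, A g, …, A^{l(g)-1} g`, of dimension at most `l(g)`. A normal operator has no nontrivial
Jordan blocks (`ker (A - μ)² = ker (A - μ)`), so that space is spanned by eigenvectors of `A`,
and `g` splits into at most `l(g)` eigenvectors with distinct eigenvalues. Hence the eigenvectors
span a dense subspace. Eigenspaces of a normal operator are closed and mutually orthogonal, so
Hilbert bases of the individual eigenspaces combine into a Hilbert basis of `H`; it is countable
because `H` is separable.
-/

open ContinuousLinearMap Module End Submodule TopologicalSpace

universe u v

namespace Module.End

variable {K V : Type*} [Field K] [AddCommGroup V] [Module K V]

theorem exists_sum_maxGenEigenspace_of_mem [IsAlgClosed K] (f : End K V) {p : Submodule K V}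
    [FiniteDimensional K p] (hp : ∀ x ∈ p, f x ∈ p) {x : V} (hx : x ∈ p) :
    ∃ (s : Finset K) (v : K → V), s.card ≤ finrank K p ∧
      (∀ μ ∈ s, v μ ≠ 0 ∧ v μ ∈ f.maxGenEigenspace μ) ∧ x = ∑ μ ∈ s, v μ := by
  have hx' : (⟨x, hx⟩ : p) ∈ ⨆ μ, maxGenEigenspace (f.restrict hp) μ := by
    rw [iSup_maxGenEigenspace_eq_top]; trivial
  obtain ⟨c, hc, hsum⟩ := (mem_iSup_iff_exists_finsupp _ _).mp hx'
  refine ⟨c.support, fun μ => c μ, ?_, fun μ hμ => ⟨?_, ?_⟩, ?_⟩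
  · have hli : LinearIndependent K fun μ : c.support => c μ :=
      (independent_maxGenEigenspace (f.restrict hp)).comp Subtype.val_injective
        |>.linearIndependent _ (fun μ => hc μ) (fun μ => Finsupp.mem_support_iff.mp μ.2)
    simpa using hli.fintype_card_le_finrank
  · simpa using Finsupp.mem_support_iff.mp hμ
  · have hmem := hc μ
    rwa [maxGenEigenspace, genEigenspace_restrict] at hmem
  · simpa [Finsupp.sum] using (congrArg Subtype.val hsum).symm

def krylovSubspace (f : End K V) (x : V) (n : ℕ) : Submodule K V :=
  span K {y | ∃ k, k < n ∧ y = (f ^ k) x}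

variable (f : End K V) (x : V) (n : ℕ)

theorem pow_apply_mem_krylovSubspace {k : ℕ} (hk : k < n) : (f ^ k) x ∈ krylovSubspace f x n :=
  subset_span ⟨k, hk, rfl⟩

theorem krylovSubspace_eq_span_range :
    krylovSubspace f x n = span K (Set.range fun k : Fin n => (f ^ (k : ℕ)) x) := by
  refine congrArg _ (Set.ext fun y => ⟨?_, ?_⟩)
  · rintro ⟨k, hk, rfl⟩; exact ⟨⟨k, hk⟩, rfl⟩
  · rintro ⟨k, rfl⟩; exact ⟨k, k.2, rfl⟩

instance : FiniteDimensional K (krylovSubspace f x n) := by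
  rw [krylovSubspace_eq_span_range]
  exact FiniteDimensional.span_of_finite K (Set.finite_range _)

theorem finrank_krylovSubspace_le : finrank K (krylovSubspace f x n) ≤ n := by
  rw [krylovSubspace_eq_span_range]
  exact (finrank_range_le_card (R := K) fun k : Fin n => (f ^ (k : ℕ)) x).trans_eq
    (Fintype.card_fin n)

variable {f x n}

theorem pow_apply_mem_krylovSubspace_of_le (h : (f ^ n) x ∈ krylovSubspace f x n) {k : ℕ}
    (hk : k ≤ n) : (f ^ k) x ∈ krylovSubspace f x n := by
  rcases hk.lt_or_eq with hk | rfl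
  · exact pow_apply_mem_krylovSubspace f x n hk
  · exact h

theorem mapsTo_krylovSubspace (h : (f ^ n) x ∈ krylovSubspace f x n) :
    ∀ y ∈ krylovSubspace f x n, f y ∈ krylovSubspace f x n := by
  suffices krylovSubspace f x n ≤ (krylovSubspace f x n).comap f from fun y hy => this hy
  refine span_le.mpr ?_
  rintro _ ⟨k, hk, rfl⟩
  rw [SetLike.mem_coe, mem_comap, ← mul_apply, ← pow_succ']
  exact pow_apply_mem_krylovSubspace_of_le h hk

end Module.End

theorem TopologicalSpace.separableSpace_of_countable_of_dense_span {R M : Type*} [Semiring R]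
    [TopologicalSpace R] [SeparableSpace R] [AddCommMonoid M] [Module R M] [TopologicalSpace M]
    [ContinuousAdd M] [ContinuousSMul R M] {s : Set M} (hs : s.Countable)
    (hdense : (span R s).topologicalClosure = ⊤) : SeparableSpace M := by
  rw [← isSeparable_univ_iff, ← top_coe (R := R), ← hdense, topologicalClosure_coe]
  exact hs.isSeparable.span.closure

section HilbertSpace

variable {𝕜 : Type*} {E : Type u} [RCLike 𝕜] [NormedAddCommGroup E] [InnerProductSpace 𝕜 E]

theorem Orthonormal.countable [SeparableSpace E] {ι : Type*} {v : ι → E}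
    (hv : Orthonormal 𝕜 v) : Countable ι := by
  refine Pairwise.countable_of_isOpen_disjoint (s := fun i => Metric.ball (v i) (1 / 2))
    (fun i j hij => Metric.ball_disjoint_ball ?_) (fun _ => Metric.isOpen_ball)
    (fun _ => Metric.nonempty_ball.mpr (by norm_num))
  have hsq : ‖v i - v j‖ ^ 2 = 2 := by
    rw [@norm_sub_sq 𝕜, hv.1 i, hv.1 j, hv.2 hij]
    norm_num
  rw [dist_eq_norm]
  nlinarith [norm_nonneg (v i - v j)]

variable [CompleteSpace E]

theorem HilbertBasis.exists_reindex_of_separableSpace [SeparableSpace E] {ι : Type*}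
    (b : HilbertBasis ι 𝕜 E) :
    ∃ (κ : Type) (e : ι ≃ κ) (b' : HilbertBasis κ 𝕜 E), ⇑b' = b ∘ e.symm := by
  have := b.orthonormal.countable
  let e := equivShrink.{0} ι
  refine ⟨Shrink ι, e, HilbertBasis.mk (b.orthonormal.comp _ e.symm.injective) ?_,
    HilbertBasis.coe_mk _ _⟩
  rw [e.symm.surjective.range_comp, b.dense_span]

theorem OrthogonalFamily.exists_hilbertBasis_subordinate {ι : Type v} {F : ι → Submodule 𝕜 E}
    [∀ i, CompleteSpace (F i)] (hF : OrthogonalFamily 𝕜 (fun i => F i) fun i => (F i).subtypeₗᵢ)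
    (hdense : (⨆ i, F i).topologicalClosure = ⊤) :
    ∃ (κ : Type (max u v)) (b : HilbertBasis κ 𝕜 E), ∀ k, ∃ i, b k ∈ F i := by
  choose w b hb using fun i => exists_hilbertBasis 𝕜 (F i)
  let v : (Σ i, w i) → E := fun a => (F a.1).subtypeₗᵢ (b a.1 a.2)
  have hv : Orthonormal 𝕜 v := hF.orthonormal_sigma_orthonormal fun i => (b i).orthonormal
  have hspan : ⊤ ≤ (span 𝕜 (Set.range v)).topologicalClosure := by
    rw [← hdense]
    refine topologicalClosure_minimal _ (iSup_le fun i x hx => ?_) (isClosed_topologicalClosure _)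
    have hsum := ((b i).hasSum_repr ⟨x, hx⟩).mapL (F i).subtypeL
    refine mem_closure_of_tendsto hsum (Filter.Eventually.of_forall fun s => sum_mem fun j _ => ?_)
    rw [map_smul]
    exact smul_mem _ _ (subset_span (Set.mem_range_self (⟨i, j⟩ : Σ i, w i)))
  refine ⟨_, HilbertBasis.mk hv hspan, fun a => ⟨a.1, ?_⟩⟩
  rw [HilbertBasis.coe_mk]
  exact (b a.1 a.2).2

end HilbertSpace

namespace IsStarNormal

section RCLike

variable {𝕜 E : Type*} [RCLike 𝕜] [NormedAddCommGroup E] [InnerProductSpace 𝕜 E]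
  [CompleteSpace E] {T : E →L[𝕜] E}

theorem sub_smul_one (hT : IsStarNormal T) (μ : 𝕜) : IsStarNormal (T - μ • 1) :=
  Commute.isStarNormal_sub (by simpa using (Commute.one_right T).smul_right _)

theorem apply_eq_zero_of_apply_apply_eq_zero (hT : IsStarNormal T) {x : E} (hx : T (T x) = 0) :
    T x = 0 := by
  have hperp : T x ∈ (LinearMap.range (T : E →ₗ[𝕜] E))ᗮ := by
    rw [hT.orthogonal_range]; exact hx
  exact inner_self_eq_zero.mp (hperp _ ⟨x, rfl⟩)

theorem apply_eq_zero_of_pow_apply_eq_zero (hT : IsStarNormal T) {x : E} :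
    ∀ {k : ℕ}, (T ^ k) x = 0 → T x = 0
  | 0, hx => by simp_all
  | k + 1, hx => by
    rw [pow_succ, mul_apply_eq_comp] at hx
    exact hT.apply_eq_zero_of_apply_apply_eq_zero (hT.apply_eq_zero_of_pow_apply_eq_zero hx)

theorem maxGenEigenspace_eq_eigenspace (hT : IsStarNormal T) (μ : 𝕜) :
    maxGenEigenspace (T : End 𝕜 E) μ = eigenspace (T : End 𝕜 E) μ := by
  refine le_antisymm (fun x hx => ?_) eigenspace_le_maxGenEigenspace
  obtain ⟨k, hk⟩ := (mem_maxGenEigenspace _ _ _).mp hx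
  rw [show (T : End 𝕜 E) - μ • 1 = ((T - μ • 1 : E →L[𝕜] E) : End 𝕜 E) by ext; simp,
    ← toLinearMap_pow] at hk
  simpa [sub_eq_zero, mem_eigenspace_iff] using
    (hT.sub_smul_one μ).apply_eq_zero_of_pow_apply_eq_zero hk

theorem adjoint_apply_eq_of_apply_eq_smul (hT : IsStarNormal T) {x : E} {μ : 𝕜}
    (hx : T x = μ • x) : adjoint T x = starRingEnd 𝕜 μ • x := by
  have := ((hT.sub_smul_one μ).adjoint_apply_eq_zero_iff x).mpr (by simp [hx])
  simpa [← star_eq_adjoint, sub_eq_zero] using this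

theorem orthogonalFamily_eigenspaces (hT : IsStarNormal T) :
    OrthogonalFamily 𝕜 (fun μ => eigenspace (T : End 𝕜 E) μ)
      fun μ => (eigenspace (T : End 𝕜 E) μ).subtypeₗᵢ := by
  rintro μ ν hμν ⟨v, hv⟩ ⟨w, hw⟩
  rw [mem_eigenspace_iff, coe_coe] at hv hw
  have key : starRingEnd 𝕜 μ * inner 𝕜 v w = starRingEnd 𝕜 ν * inner 𝕜 v w :=
    calc starRingEnd 𝕜 μ * inner 𝕜 v w = inner 𝕜 (T v) w := by rw [hv, inner_smul_left]
      _ = inner 𝕜 v (adjoint T w) := (adjoint_inner_right T v w).symm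
      _ = starRingEnd 𝕜 ν * inner 𝕜 v w := by
        rw [hT.adjoint_apply_eq_of_apply_eq_smul hw, inner_smul_right]
  exact (mul_eq_mul_right_iff.mp key).resolve_left ((starRingEnd 𝕜).injective.ne hμν)

end RCLike

theorem exists_sum_eigenvectors_of_mem {E : Type*} [NormedAddCommGroup E]
    [InnerProductSpace ℂ E] [CompleteSpace E] {T : E →L[ℂ] E} (hT : IsStarNormal T)
    {p : Submodule ℂ E} [FiniteDimensional ℂ p] (hp : ∀ x ∈ p, T x ∈ p)
    {x : E} (hx : x ∈ p) :
    ∃ k ≤ finrank ℂ p, ∃ (v : Fin k → E) (μ : Fin k → ℂ), Function.Injective μ ∧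
      (∀ j, v j ≠ 0 ∧ T (v j) = μ j • v j) ∧ x = ∑ j, v j := by
  obtain ⟨s, v, hcard, hv, rfl⟩ := exists_sum_maxGenEigenspace_of_mem (T : End ℂ E) hp hx
  refine ⟨s.card, hcard, fun j => v (s.equivFin.symm j), fun j => s.equivFin.symm j,
    Subtype.val_injective.comp s.equivFin.symm.injective, fun j => ?_, ?_⟩
  · obtain ⟨hne, hmem⟩ := hv _ (s.equivFin.symm j).2
    rw [hT.maxGenEigenspace_eq_eigenspace, mem_eigenspace_iff] at hmem
    exact ⟨hne, hmem⟩
  · rw [← s.sum_coe_sort]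
    exact (Equiv.sum_comp s.equivFin.symm _).symm

end IsStarNormal

/-- Let `A` be a bounded normal operator on a complex Hilbert space `H` and `G` a countable
set of vectors such that each `g ∈ G` has a finite annihilator degree `l g` (i.e.
`A^{l g} g ∈ span {A^k g : k < l g}`) and the system `{A^n g : g ∈ G, 0 ≤ n ≤ l g}` is
complete in `H`. Then `H` has an orthonormal basis of eigenvectors of `A`, and every `g ∈ G`
is a sum of at most `l g` eigenvectors of `A` with distinct eigenvalues. -/
theorem stmt_15 {H : Type*} [NormedAddCommGroup H] [InnerProductSpace ℂ H] [CompleteSpace H]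
    (A : H →L[ℂ] H) (hA : adjoint A ∘L A = A ∘L adjoint A)
    (G : Set H) (hG : G.Countable) (l : ↥G → ℕ)
    (hl : ∀ g : ↥G, (A ^ l g) (g : H) ∈
      Submodule.span ℂ {x | ∃ k : ℕ, k < l g ∧ x = (A ^ k) (g : H)})
    (hcomplete :
      (Submodule.span ℂ
        {x | ∃ g : ↥G, ∃ n : ℕ, n ≤ l g ∧ x = (A ^ n) (g : H)}).topologicalClosure = ⊤) :
    (∃ (ι : Type) (b : HilbertBasis ι ℂ H), ∀ i : ι, ∃ μ : ℂ, A (b i) = μ • b i) ∧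
    ∀ g : ↥G, ∃ k : ℕ, k ≤ l g ∧ ∃ (v : Fin k → H) (μ : Fin k → ℂ),
      Function.Injective μ ∧ (∀ j, v j ≠ 0 ∧ A (v j) = μ j • v j) ∧
      (g : H) = ∑ j, v j := by
  have hnormal : IsStarNormal A := ⟨hA⟩
  have hkrylov (g : G) : ((A : End ℂ H) ^ l g) g ∈ krylovSubspace (A : End ℂ H) g (l g) := by
    simpa only [krylovSubspace, ← toLinearMap_pow, coe_coe] using hl g
  have hdecomp (g : G) (n : ℕ) (hn : n ≤ l g) : ∃ k ≤ l g, ∃ (v : Fin k → H) (μ : Fin k → ℂ),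
      Function.Injective μ ∧ (∀ j, v j ≠ 0 ∧ A (v j) = μ j • v j) ∧ (A ^ n) (g : H) = ∑ j, v j := by
    have hmem : (A ^ n) (g : H) ∈ krylovSubspace (A : End ℂ H) g (l g) := by
      simpa only [← toLinearMap_pow, coe_coe] using
        pow_apply_mem_krylovSubspace_of_le (hkrylov g) hn
    obtain ⟨k, hk, hv⟩ :=
      hnormal.exists_sum_eigenvectors_of_mem (mapsTo_krylovSubspace (hkrylov g)) hmem
    exact ⟨k, hk.trans (finrank_krylovSubspace_le _ _ _), hv⟩
  refine ⟨?_, fun g => by simpa using hdecomp g 0 (Nat.zero_le _)⟩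
  have hdense : (⨆ μ, eigenspace (A : End ℂ H) μ).topologicalClosure = ⊤ := by
    refine eq_top_iff.mpr (hcomplete ▸ topologicalClosure_mono (span_le.mpr ?_))
    rintro _ ⟨g, n, hn, rfl⟩
    obtain ⟨k, -, v, μ, -, hv, hsum⟩ := hdecomp g n hn
    rw [SetLike.mem_coe, hsum]
    exact sum_mem fun j _ => mem_iSup_of_mem (μ j) (mem_eigenspace_iff.mpr (hv j).2)
  have : Countable G := hG.to_subtype
  have hcountable : {x | ∃ g : G, ∃ n : ℕ, n ≤ l g ∧ x = (A ^ n) (g : H)}.Countable :=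
    (Set.countable_range fun p : G × ℕ => (A ^ p.2) (p.1 : H)).mono
      fun _ ⟨g, n, _, hx⟩ => Set.mem_range.mpr ⟨(g, n), hx.symm⟩
  have : SeparableSpace H := separableSpace_of_countable_of_dense_span hcountable hcomplete
  obtain ⟨κ, b, hb⟩ := hnormal.orthogonalFamily_eigenspaces.exists_hilbertBasis_subordinate hdense
  obtain ⟨ι, e, b', hb'⟩ := b.exists_reindex_of_separableSpace
  refine ⟨ι, b', fun i => ?_⟩
  obtain ⟨μ, hμ⟩ := hb (e.symm i)
  exact ⟨μ, by rw [hb', Function.comp_apply]; exact mem_eigenspace_iff.mp hμ⟩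
end
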